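/- Fix integers d ≥ 1 and n ≥ 1. Then Σ_{λ ∈ H_n} dif_d(λ) ≥ Σ_{λ ∈ H_n} mod'_d(λ), where dif_d(λ) counts indices 1 ≤ i < ℓ(λ) with λ_i − λ_{i+1} < d and mod'_d(λ) counts parts of λ not congruent to 1 modulo d+1. -/

import Mathlib

/-!
Every partition of perimeter `n + 1 ≥ 2` arises in exactly one way from a partition of perimeter
`n`, by adding `1` to its first part or by repeating its first part. Over the two children of `λ`,
both `mod'_d` and `dif_d` add up to `2 · stat(λ) + 1`, except that `mod'_d` loses one when
`d + 1 ∣ λ₁` and `dif_d` loses one when `λ₁ - λ₂ = d - 1`. So the totals `M_n` and `D_n` of the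
two statistics over `H_n` satisfy `D_{n+1} - M_{n+1} = 2 (D_n - M_n) + A_n - B_n`, where `A_n` and
`B_n` count the partitions in `H_n` of these two kinds, and `B_n ≤ A_n` by an explicit injection
(`roundHead`).
-/

/-- A partition: a nonempty weakly decreasing list of positive integers. -/
def IsPartition (l : List ℕ) : Prop :=
  l ≠ [] ∧ l.Pairwise (· ≥ ·) ∧ ∀ x ∈ l, 0 < x

/-- The perimeter of a partition: largest part plus number of parts minus 1. -/
def perim (l : List ℕ) : ℕ := l.headI + l.length - 1

/-- Number of repeated parts: indices i with λ_i = λ_{i+1}. -/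
def repStat (l : List ℕ) : ℕ :=
  ((List.range (l.length - 1)).filter fun i => l.getD i 0 = l.getD (i + 1) 0).length

/-- Number of even parts. -/
def evenStat (l : List ℕ) : ℕ := l.countP fun x => x % 2 = 0

/-- dif_d(λ): number of indices i with λ_i − λ_{i+1} < d. -/
def difStat (d : ℕ) (l : List ℕ) : ℕ :=
  ((List.range (l.length - 1)).filter fun i => l.getD i 0 - l.getD (i + 1) 0 < d).length

/-- mod′_d(λ): number of parts not congruent to 1 mod d+1. -/
def modStat (d : ℕ) (l : List ℕ) : ℕ := l.countP fun x => ¬ x % (d + 1) = 1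

open Finset

lemma isPartition_singleton {a : ℕ} : IsPartition [a] ↔ 0 < a := by
  simp [IsPartition]

lemma isPartition_cons_cons {a b : ℕ} {t : List ℕ} :
    IsPartition (a :: b :: t) ↔ b ≤ a ∧ IsPartition (b :: t) := by
  simp only [IsPartition, ← List.isChain_iff_pairwise, List.isChain_cons_cons, ne_eq,
    reduceCtorEq, not_false_eq_true, true_and, List.mem_cons, forall_eq_or_imp, ge_iff_le]
  exact ⟨fun ⟨⟨hba, hb⟩, _, hpos⟩ => ⟨hba, hb, hpos⟩,
    fun ⟨hba, hb, hbpos, hpos⟩ => ⟨⟨hba, hb⟩, by omega, hbpos, hpos⟩⟩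

lemma perim_cons (a : ℕ) (t : List ℕ) : perim (a :: t) = a + t.length := by
  simp [perim]

lemma IsPartition.perim_pos {l : List ℕ} (hl : IsPartition l) : 0 < perim l := by
  rcases l with _ | ⟨a, t⟩
  · exact absurd rfl hl.1
  · have := hl.2.2 a List.mem_cons_self
    rw [perim_cons]; omega

lemma isPartition_and_perim_eq_one_iff {l : List ℕ} :
    IsPartition l ∧ perim l = 1 ↔ l = [1] := by
  refine ⟨fun ⟨hl, hp⟩ => ?_, fun h => h ▸ ⟨isPartition_singleton.2 one_pos, rfl⟩⟩
  rcases l with _ | ⟨a, t⟩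
  · exact absurd rfl hl.1
  · have := hl.2.2 a List.mem_cons_self
    rw [perim_cons] at hp
    obtain ⟨rfl, ht⟩ : a = 1 ∧ t.length = 0 := by omega
    simpa using ht

def incrHead : List ℕ → List ℕ
  | [] => []
  | a :: t => (a + 1) :: t

def dupHead : List ℕ → List ℕ
  | [] => []
  | a :: t => a :: a :: t

lemma incrHead_injective : Function.Injective incrHead := by
  rintro (_ | ⟨a, s⟩) (_ | ⟨b, t⟩) h <;> simp_all [incrHead]

lemma dupHead_injective : Function.Injective dupHead := by
  rintro (_ | ⟨a, s⟩) (_ | ⟨b, t⟩) h <;> simp_all [dupHead]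

lemma incrHead_ne_dupHead {l : List ℕ} (hl : IsPartition l) (m : List ℕ) :
    incrHead l ≠ dupHead m := by
  rcases l with _ | ⟨a, t⟩
  · exact absurd rfl hl.1
  rcases m with _ | ⟨b, s⟩
  · simp [incrHead, dupHead]
  · simp only [incrHead, dupHead, ne_eq, List.cons.injEq, not_and]
    rintro rfl rfl
    simpa using List.rel_of_pairwise_cons hl.2.1 List.mem_cons_self

lemma isPartition_incrHead {l : List ℕ} (hl : IsPartition l) : IsPartition (incrHead l) := by
  rcases l with _ | ⟨a, _ | ⟨b, t⟩⟩
  · exact hl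
  · exact isPartition_singleton.2 a.succ_pos
  · obtain ⟨hba, hbt⟩ := isPartition_cons_cons.1 hl
    exact isPartition_cons_cons.2 ⟨by omega, hbt⟩

lemma isPartition_dupHead {l : List ℕ} (hl : IsPartition l) : IsPartition (dupHead l) := by
  rcases l with _ | ⟨a, t⟩
  · exact hl
  · exact isPartition_cons_cons.2 ⟨le_rfl, hl⟩

lemma perim_incrHead {l : List ℕ} (hl : l ≠ []) : perim (incrHead l) = perim l + 1 := by
  obtain ⟨a, t, rfl⟩ := List.exists_cons_of_ne_nil hl
  simp only [incrHead, perim_cons]; omega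

lemma perim_dupHead {l : List ℕ} (hl : l ≠ []) : perim (dupHead l) = perim l + 1 := by
  obtain ⟨a, t, rfl⟩ := List.exists_cons_of_ne_nil hl
  simp only [dupHead, perim_cons, List.length_cons]; omega

lemma IsPartition.exists_eq_incrHead_or_dupHead {l : List ℕ} (hl : IsPartition l)
    (h : 2 ≤ perim l) :
    ∃ m, IsPartition m ∧ perim l = perim m + 1 ∧ (incrHead m = l ∨ dupHead m = l) := by
  rcases l with _ | ⟨a, _ | ⟨b, t⟩⟩
  · exact absurd rfl hl.1
  · simp only [perim_cons, List.length_nil, add_zero] at h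
    exact ⟨[a - 1], isPartition_singleton.2 (by omega), by simp [perim_cons]; omega,
      .inl (by simp [incrHead]; omega)⟩
  · obtain ⟨hba, hbt⟩ := isPartition_cons_cons.1 hl
    rcases hba.eq_or_lt with rfl | hlt
    · exact ⟨b :: t, hbt, by simp only [perim_cons, List.length_cons]; omega, .inr rfl⟩
    · exact ⟨(a - 1) :: b :: t, isPartition_cons_cons.2 ⟨by omega, hbt⟩,
        by simp [perim_cons]; omega, .inl (by simp [incrHead]; omega)⟩

def perimPartitions : ℕ → Finset (List ℕ)
  | 0 => ∅
  | 1 => {[1]}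
  | n + 2 => (perimPartitions (n + 1)).image incrHead ∪ (perimPartitions (n + 1)).image dupHead

lemma mem_perimPartitions {n : ℕ} {l : List ℕ} :
    l ∈ perimPartitions n ↔ IsPartition l ∧ perim l = n := by
  induction n using perimPartitions.induct generalizing l with
  | case1 => simpa [perimPartitions] using fun hl => hl.perim_pos.ne'
  | case2 => simpa [perimPartitions] using isPartition_and_perim_eq_one_iff.symm
  | case3 n ih =>
    simp only [perimPartitions, mem_union, mem_image, ih]
    constructor
    · rintro (⟨m, ⟨hm, hp⟩, rfl⟩ | ⟨m, ⟨hm, hp⟩, rfl⟩)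
      · exact ⟨isPartition_incrHead hm, by rw [perim_incrHead hm.1, hp]⟩
      · exact ⟨isPartition_dupHead hm, by rw [perim_dupHead hm.1, hp]⟩
    · rintro ⟨hl, hp⟩
      obtain ⟨m, hm, hpm, rfl | rfl⟩ := hl.exists_eq_incrHead_or_dupHead (by omega)
      · exact .inl ⟨m, ⟨hm, by omega⟩, rfl⟩
      · exact .inr ⟨m, ⟨hm, by omega⟩, rfl⟩

lemma coe_perimPartitions (n : ℕ) :
    (perimPartitions n : Set (List ℕ)) = {l | IsPartition l ∧ perim l = n} :=
  Set.ext fun _ => mem_perimPartitions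

lemma sum_perimPartitions_succ {M : Type*} [AddCommMonoid M] {n : ℕ} (hn : 0 < n)
    (f : List ℕ → M) :
    ∑ l ∈ perimPartitions (n + 1), f l =
      ∑ l ∈ perimPartitions n, (f (incrHead l) + f (dupHead l)) := by
  obtain ⟨n, rfl⟩ := Nat.exists_eq_add_of_lt hn
  have hdisj : Disjoint ((perimPartitions (n + 1)).image incrHead)
      ((perimPartitions (n + 1)).image dupHead) := by
    simp only [disjoint_left, mem_image, not_exists, not_and]
    rintro _ ⟨l, hl, rfl⟩ m -
    exact (incrHead_ne_dupHead (mem_perimPartitions.1 hl).1 m).symm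
  rw [zero_add, perimPartitions, sum_union hdisj, sum_image incrHead_injective.injOn,
    sum_image dupHead_injective.injOn, sum_add_distrib]

lemma modStat_cons (d a : ℕ) (t : List ℕ) :
    modStat d (a :: t) = modStat d t + if a % (d + 1) = 1 then 0 else 1 := by
  by_cases h : a % (d + 1) = 1 <;> simp [modStat, h]

lemma difStat_singleton (d a : ℕ) : difStat d [a] = 0 := by
  simp [difStat]

lemma difStat_cons_cons (d a b : ℕ) (t : List ℕ) :
    difStat d (a :: b :: t) = difStat d (b :: t) + if a - b < d then 1 else 0 := by
  simp only [difStat, List.length_cons, Nat.add_sub_cancel, List.range_succ_eq_map,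
    List.filter_cons, List.filter_map, List.getD_cons_succ, List.getD_cons_zero,
    Function.comp_def]
  by_cases h : a - b < d <;> simp [h, Nat.add_comm]

lemma add_one_mod_eq_one_iff {d : ℕ} (hd : 0 < d) (a : ℕ) :
    (a + 1) % (d + 1) = 1 ↔ d + 1 ∣ a := by
  rw [← Nat.add_modEq_right_iff (b := 1), Nat.ModEq, Nat.mod_eq_of_lt (a := 1) (by omega)]

lemma modStat_incrHead_add_modStat_dupHead {d : ℕ} (hd : 0 < d) (l : List ℕ) :
    modStat d (incrHead l) + modStat d (dupHead l) + (if d + 1 ∣ l.headI then 1 else 0) =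
      2 * modStat d l + 1 := by
  rcases l with _ | ⟨a, t⟩
  · simp [incrHead, dupHead, modStat]
  · simp only [incrHead, dupHead, modStat_cons, add_one_mod_eq_one_iff hd, List.headI_cons,
      Nat.dvd_iff_mod_eq_zero]
    split_ifs <;> omega

lemma difStat_incrHead_add_difStat_dupHead {d : ℕ} (hd : 0 < d) {l : List ℕ}
    (hl : IsPartition l) :
    difStat d (incrHead l) + difStat d (dupHead l) +
      (if 1 < l.length ∧ l.headI - l.tail.headI = d - 1 then 1 else 0) =
      2 * difStat d l + 1 := by
  rcases l with _ | ⟨a, _ | ⟨b, t⟩⟩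
  · exact absurd rfl hl.1
  · simp [incrHead, dupHead, difStat_singleton, difStat_cons_cons, hd]
  · have hba := (isPartition_cons_cons.1 hl).1
    simp only [incrHead, dupHead, difStat_cons_cons, List.length_cons, List.headI_cons,
      List.tail_cons, Nat.one_lt_succ_succ, true_and, Nat.sub_self, hd]
    split_ifs <;> omega

lemma sum_modStat_perimPartitions_succ {d n : ℕ} (hd : 0 < d) (hn : 0 < n) :
    ∑ l ∈ perimPartitions (n + 1), modStat d l +
        #{l ∈ perimPartitions n | d + 1 ∣ l.headI} =
      2 * ∑ l ∈ perimPartitions n, modStat d l + #(perimPartitions n) := by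
  rw [sum_perimPartitions_succ hn, card_filter, mul_sum, card_eq_sum_ones,
    ← sum_add_distrib, ← sum_add_distrib]
  exact sum_congr rfl fun l _ => modStat_incrHead_add_modStat_dupHead hd l

lemma sum_difStat_perimPartitions_succ {d n : ℕ} (hd : 0 < d) (hn : 0 < n) :
    ∑ l ∈ perimPartitions (n + 1), difStat d l +
        #{l ∈ perimPartitions n | 1 < l.length ∧ l.headI - l.tail.headI = d - 1} =
      2 * ∑ l ∈ perimPartitions n, difStat d l + #(perimPartitions n) := by
  rw [sum_perimPartitions_succ hn, card_filter, mul_sum, card_eq_sum_ones,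
    ← sum_add_distrib, ← sum_add_distrib]
  exact sum_congr rfl fun l hl =>
    difStat_incrHead_add_difStat_dupHead hd (mem_perimPartitions.1 hl).1

/-- Rounds `a + 1` down to a multiple of `d + 1` and pays the remainder with copies of `b`. -/
def roundHead (d : ℕ) : List ℕ → List ℕ
  | a :: b :: r => (a + 1) / (d + 1) * (d + 1) :: (List.replicate ((a + 1) % (d + 1)) b ++ r)
  | l => l

lemma dvd_headI_roundHead (d a b : ℕ) (r : List ℕ) :
    d + 1 ∣ (roundHead d (a :: b :: r)).headI :=
  Nat.dvd_mul_left _ _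

lemma perim_roundHead (d a b : ℕ) (r : List ℕ) :
    perim (roundHead d (a :: b :: r)) = perim (a :: b :: r) := by
  have := Nat.div_add_mod' (a + 1) (d + 1)
  simp only [roundHead, perim_cons, List.length_append, List.length_replicate, List.length_cons]
  omega

lemma isPartition_roundHead {d a b : ℕ} {r : List ℕ} (hl : IsPartition (a :: b :: r))
    (hab : a + 1 = b + d) : IsPartition (roundHead d (a :: b :: r)) := by
  obtain ⟨-, hs, hpos⟩ := hl
  obtain ⟨hbr, hr⟩ := List.pairwise_cons.1 (List.pairwise_cons.1 hs).2
  have hb : 0 < b := hpos b (by simp)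
  have hq := Nat.div_add_mod' (a + 1) (d + 1)
  have hk := Nat.mod_lt (a + 1) (by omega : 0 < d + 1)
  have hle : ∀ x ∈ List.replicate ((a + 1) % (d + 1)) b ++ r, x ≤ b ∧ 0 < x := by
    simp only [List.mem_append, List.mem_replicate]
    rintro x (⟨-, rfl⟩ | hx)
    exacts [⟨le_rfl, hb⟩, ⟨hbr x hx, hpos x (by simp [hx])⟩]
  refine ⟨List.cons_ne_nil _ _, List.pairwise_cons.2 ⟨fun x hx => ?_, ?_⟩, ?_⟩
  · have := (hle x hx).1; omega
  · refine List.pairwise_append.2 ⟨List.pairwise_replicate.2 (.inr le_rfl), hr, ?_⟩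
    intro x hx y hy
    rw [(List.mem_replicate.1 hx).2]
    exact hbr y hy
  · simp only [roundHead, List.mem_cons]
    rintro x (rfl | hx)
    · omega
    · exact (hle x hx).2

lemma roundHead_inj {d a b a' b' : ℕ} {r r' : List ℕ} (hr : ∀ x ∈ r, x ≤ b)
    (hr' : ∀ x ∈ r', x ≤ b') (hab : a + 1 = b + d) (hab' : a' + 1 = b' + d)
    (h : roundHead d (a :: b :: r) = roundHead d (a' :: b' :: r')) :
    a :: b :: r = a' :: b' :: r' := by
  have hq := Nat.div_add_mod' (a + 1) (d + 1)
  have hq' := Nat.div_add_mod' (a' + 1) (d + 1)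
  simp only [roundHead, List.cons.injEq] at h
  obtain ⟨hhead, htail⟩ := h
  have key : ∀ {b b' k k' : ℕ} {r r' : List ℕ}, (∀ x ∈ r', x ≤ b') →
      b + k' = b' + k →
      List.replicate k b ++ r = List.replicate k' b' ++ r' → b ≤ b' := by
    intro b b' k k' r r' hr' hsum h
    rcases k.eq_zero_or_pos with rfl | hk
    · omega
    · have hmem : b ∈ List.replicate k' b' ++ r' :=
        h ▸ List.mem_append_left _ (List.mem_replicate.2 ⟨hk.ne', rfl⟩)
      rcases List.mem_append.1 hmem with hx | hx
      · exact (List.mem_replicate.1 hx).2.le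
      · exact hr' b hx
  obtain rfl : b = b' := le_antisymm (key hr' (by omega) htail) (key hr (by omega) htail.symm)
  obtain rfl : a = a' := by omega
  simpa using htail

lemma card_filter_gap_le_card_filter_dvd_headI {d : ℕ} (hd : 0 < d) (n : ℕ) :
    #{l ∈ perimPartitions n | 1 < l.length ∧ l.headI - l.tail.headI = d - 1} ≤
      #{l ∈ perimPartitions n | d + 1 ∣ l.headI} := by
  have hgap : ∀ l ∈ {l ∈ perimPartitions n | 1 < l.length ∧ l.headI - l.tail.headI = d - 1},
      ∃ a b r, l = a :: b :: r ∧ IsPartition l ∧ perim l = n ∧ a + 1 = b + d := by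
    rintro (_ | ⟨a, _ | ⟨b, r⟩⟩) hl
    · simp at hl
    · simp at hl
    · obtain ⟨hmem, -, hgap⟩ := mem_filter.1 hl
      obtain ⟨hl, hp⟩ := mem_perimPartitions.1 hmem
      have := (isPartition_cons_cons.1 hl).1
      exact ⟨a, b, r, rfl, hl, hp, by simp at hgap; omega⟩
  refine card_le_card_of_injOn (roundHead d) (fun l hl => ?_) (fun l hl l' hl' h => ?_)
  · obtain ⟨a, b, r, rfl, hl, hp, hab⟩ := hgap l hl
    simp only [coe_filter, Set.mem_ofPred_eq, mem_perimPartitions, perim_roundHead]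
    exact ⟨⟨isPartition_roundHead hl hab, hp⟩, dvd_headI_roundHead d a b r⟩
  · obtain ⟨a, b, r, rfl, hl, -, hab⟩ := hgap l hl
    obtain ⟨a', b', r', rfl, hl', -, hab'⟩ := hgap l' hl'
    exact roundHead_inj (fun x => List.rel_of_pairwise_cons (List.pairwise_cons.1 hl.2.1).2)
      (fun x => List.rel_of_pairwise_cons (List.pairwise_cons.1 hl'.2.1).2) hab hab' h

lemma sum_modStat_le_sum_difStat {d : ℕ} (hd : 0 < d) (n : ℕ) :
    ∑ l ∈ perimPartitions n, modStat d l ≤ ∑ l ∈ perimPartitions n, difStat d l := by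
  induction n using perimPartitions.induct with
  | case1 => simp [perimPartitions]
  | case2 =>
    simp [perimPartitions, modStat, difStat, Nat.mod_eq_of_lt (a := 1) (by omega : 1 < d + 1)]
  | case3 n ih =>
    show ∑ l ∈ perimPartitions (n + 1 + 1), _ ≤ ∑ l ∈ perimPartitions (n + 1 + 1), _
    have hmod := sum_modStat_perimPartitions_succ (n := n + 1) hd (by omega)
    have hdif := sum_difStat_perimPartitions_succ (n := n + 1) hd (by omega)
    have hcard := card_filter_gap_le_card_filter_dvd_headI hd (n + 1)
    omega

theorem total_dif_ge_total_mod_general (d n : ℕ) (hd : 1 ≤ d) :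
    ∑ᶠ l ∈ {l : List ℕ | IsPartition l ∧ perim l = n}, modStat d l ≤
    ∑ᶠ l ∈ {l : List ℕ | IsPartition l ∧ perim l = n}, difStat d l := by
  rw [← coe_perimPartitions, finsum_mem_coe_finset, finsum_mem_coe_finset]
  exact sum_modStat_le_sum_difStat hd n

theorem total_dif_ge_total_mod (d n : ℕ) (hd : 1 ≤ d) (hn : 1 ≤ n) :
    ∑ᶠ l ∈ {l : List ℕ | IsPartition l ∧ perim l = n}, modStat d l ≤
    ∑ᶠ l ∈ {l : List ℕ | IsPartition l ∧ perim l = n}, difStat d l :=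
  total_dif_ge_total_mod_general d n hd
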